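/- Let n ≥ 1, let Ω ⊆ ℝ^n be open, let k_{ij} : ℝ^n → ℝ be C¹, let h : Ω → ℝ, let k̂_{ij} ∈ ℝ be constants, and let ε > 0. Suppose: (a) T^ε : Ω → ℝ is C² and satisfies −∂_i( k_{ij}(x/ε) ∂_j T^ε )(x) = h(x) on Ω; (b) T⁽⁰⁾ : Ω → ℝ is C⁴ and satisfies −k̂_{ij} ∂_i∂_j T⁽⁰⁾(x) = h(x) on Ω; (c) for each α, M_α : ℝ^n → ℝ is C² with ∂_{y_i}( k_{ij}(y) ∂_{y_j}M_α ) = −∂_{y_i}k_{iα} for all y; (d) for each (α₁,α₂), M_{α₁α₂} : ℝ^n → ℝ is C² with ∂_{y_i}( k_{ij}(y) ∂_{y_j}M_{α₁α₂} ) = k̂_{α₁α₂} − k_{α₁α₂}(y) − ∂_{y_i}( k_{iα₂}(y) M_{α₁}(y) ) − k_{α₁ j}(y) ∂_{y_j}M_{α₂}(y) for all y. Define T⁽¹⁾(x,y) = M_α(y)∂_α T⁽⁰⁾(x), T⁽²⁾(x,y) = M_{α₁α₂}(y) ∂²_{α₁α₂}T⁽⁰⁾(x), the second-order two-scale approximation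 T^{(2ε)}(x) = T⁽⁰⁾(x) + ε T⁽¹⁾(x, x/ε) + ε² T⁽²⁾(x, x/ε), and the residual T_Δ^{(2ε)} = T^ε − T^{(2ε)}. Then for every x ∈ Ω, −∂_i( k_{ij}(x/ε) ∂_j T_Δ^{(2ε)} )(x) = ε G₀(x, x/ε) + ε² G₁(x, x/ε), where G₀(x,y) = ∂_{y_i}( k_{ij}(y) ∂_{x_j}T⁽²⁾(x,y) ) + ∂_{x_i}( k_{ij}(y) ∂_{y_j}T⁽²⁾(x,y) ) + ∂_{x_i}( k_{ij}(y) ∂_{x_j}T⁽¹⁾(x,y) ) and G₁(x,y) = ∂_{x_i}( k_{ij}(y) ∂_{x_j}T⁽²⁾(x,y) ), with ∂_{x_i} acting on x-arguments and ∂_{y_i} on y-arguments (Einstein summation throughout). -/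

import Mathlib

/-!
Write `y = x/ε`. The chain rule `∂ₓ[F(x, x/ε)] = (∂ₓ + ε⁻¹ ∂_y) F` splits the oscillating
operator applied to `F(x, x/ε)` into
`∇ₓ·(k ∇ₓF) + ε⁻¹ (∇ₓ·(k ∇_y F) + ∇_y·(k ∇ₓF)) + ε⁻² ∇_y·(k ∇_y F)`.
Apply this to `T⁰ + ε T¹ + ε² T²`. The `ε⁻²` terms vanish because `T⁰` does not depend on `y`;
the `ε⁻¹` terms cancel by the first-order cell equations; by the second-order cell equations and
the symmetry of `∇²T⁰`, the `ε⁰` terms add up to `k̂ : ∇²T⁰ = -h`, which cancels against the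
equation for `T^ε`. What is left is `ε G₀ + ε² G₁`.
-/

open scoped BigOperators

/-- Partial derivative of `f : ℝ^n → ℝ` in the `i`-th coordinate direction. -/
noncomputable def pd {n : ℕ} (i : Fin n) (f : (Fin n → ℝ) → ℝ) (y : Fin n → ℝ) : ℝ :=
  fderiv ℝ f y (Pi.single i 1)

/-- The separated first-order corrector `T¹(x,y) = M_α(y) ∂_α T⁰(x)`. -/
noncomputable def T1sep {n : ℕ} (M : Fin n → (Fin n → ℝ) → ℝ) (T0 : (Fin n → ℝ) → ℝ)
    (x y : Fin n → ℝ) : ℝ :=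
  ∑ α, M α y * pd α T0 x

/-- The separated second-order corrector `T²(x,y) = M_{α₁α₂}(y) ∂²_{α₁α₂}T⁰(x)`. -/
noncomputable def T2sep {n : ℕ} (M2 : Fin n → Fin n → (Fin n → ℝ) → ℝ)
    (T0 : (Fin n → ℝ) → ℝ) (x y : Fin n → ℝ) : ℝ :=
  ∑ α₁, ∑ α₂, M2 α₁ α₂ y * pd α₁ (pd α₂ T0) x

open Function Filter Topology

section PartialDerivative

variable {n : ℕ} {i j : Fin n} {f g : (Fin n → ℝ) → ℝ} {x : Fin n → ℝ} {c : ℝ}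

lemma pd_congr (h : f =ᶠ[𝓝 x] g) : pd i f x = pd i g x := by
  rw [pd, pd, h.fderiv_eq]

lemma pd_add (hf : DifferentiableAt ℝ f x) (hg : DifferentiableAt ℝ g x) :
    pd i (fun y => f y + g y) x = pd i f x + pd i g x := by
  rw [pd, fderiv_fun_add hf hg]; rfl

lemma pd_const_mul (hf : DifferentiableAt ℝ f x) :
    pd i (fun y => c * f y) x = c * pd i f x := by
  rw [pd, fderiv_const_mul hf]; rfl

lemma pd_mul_const (hf : DifferentiableAt ℝ f x) :
    pd i (fun y => f y * c) x = pd i f x * c := by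
  rw [pd, fderiv_mul_const hf, smul_apply, smul_eq_mul, mul_comm]; rfl

lemma pd_const : pd i (fun _ => c) x = 0 := by
  rw [pd, fderiv_fun_const]; rfl

lemma pd_sum {ι : Type*} (s : Finset ι) {u : ι → (Fin n → ℝ) → ℝ}
    (hu : ∀ a ∈ s, DifferentiableAt ℝ (u a) x) :
    pd i (fun y => ∑ a ∈ s, u a y) x = ∑ a ∈ s, pd i (u a) x := by
  rw [pd, fderiv_fun_sum hu, _root_.sum_apply]; rfl

lemma contDiffAt_pd {m : ℕ} (hf : ContDiffAt ℝ (m + 1) f x) :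
    ContDiffAt ℝ m (pd i f) x :=
  (hf.fderiv_right le_rfl).clm_apply contDiffAt_const

lemma differentiableAt_pd (hf : ContDiffAt ℝ 2 f x) : DifferentiableAt ℝ (pd i f) x :=
  (contDiffAt_pd (m := 1) hf).differentiableAt one_ne_zero

lemma pd_symm (hf : ContDiffAt ℝ 2 f x) : pd i (pd j f) x = pd j (pd i f) x := by
  have hdf : DifferentiableAt ℝ (fderiv ℝ f) x :=
    (hf.fderiv_right (m := 1) le_rfl).differentiableAt one_ne_zero
  have hsecond : ∀ a b : Fin n,
      pd a (pd b f) x = fderiv ℝ (fderiv ℝ f) x (Pi.single a 1) (Pi.single b 1) := by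
    intro a b
    rw [pd, show pd b f = fun y => fderiv ℝ f y (Pi.single b 1) from rfl,
      fderiv_clm_apply hdf (differentiableAt_const _)]
    simp
  rw [hsecond, hsecond, hf.isSymmSndFDerivAt (by simp)]

end PartialDerivative

section TwoScale

variable {n : ℕ} {i : Fin n} {G : (Fin n → ℝ) → (Fin n → ℝ) → ℝ} {x y : Fin n → ℝ} {c : ℝ}

lemma pd_left_eq_fderiv_uncurry (hG : DifferentiableAt ℝ (uncurry G) (x, y)) :
    pd i (fun x' => G x' y) x = fderiv ℝ (uncurry G) (x, y) (Pi.single i 1, 0) := by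
  rw [pd, show (fun x' => G x' y) = uncurry G ∘ fun x' => (x', y) from rfl,
    (hG.hasFDerivAt.comp x (hasFDerivAt_prodMk_left x y)).fderiv]
  rfl

lemma pd_right_eq_fderiv_uncurry (hG : DifferentiableAt ℝ (uncurry G) (x, y)) :
    pd i (G x) y = fderiv ℝ (uncurry G) (x, y) (0, Pi.single i 1) := by
  rw [pd, show G x = uncurry G ∘ fun y' => (x, y') from rfl,
    (hG.hasFDerivAt.comp y (hasFDerivAt_prodMk_right x y)).fderiv]
  rfl

lemma DifferentiableAt.curry_left (hG : DifferentiableAt ℝ (uncurry G) (x, y)) :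
    DifferentiableAt ℝ (fun x' => G x' y) x :=
  hG.comp (f := fun x' => (x', y)) x (hasFDerivAt_prodMk_left x y).differentiableAt

lemma DifferentiableAt.curry_right (hG : DifferentiableAt ℝ (uncurry G) (x, y)) :
    DifferentiableAt ℝ (G x) y :=
  hG.comp (f := fun y' => (x, y')) y (hasFDerivAt_prodMk_right x y).differentiableAt

theorem pd_twoScale (hG : DifferentiableAt ℝ (uncurry G) (x, c • x)) :
    pd i (fun x' => G x' (c • x')) x
      = pd i (fun x' => G x' (c • x)) x + c * pd i (G x) (c • x) := by
  have hdiag : HasFDerivAt (fun x' : Fin n → ℝ => (x', c • x'))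
      ((ContinuousLinearMap.id ℝ _).prod (c • ContinuousLinearMap.id ℝ _)) x :=
    (hasFDerivAt_id x).prodMk ((hasFDerivAt_id x).const_smul c)
  rw [pd_left_eq_fderiv_uncurry hG, pd_right_eq_fderiv_uncurry hG, pd,
    show (fun x' => G x' (c • x')) = uncurry G ∘ fun x' => (x', c • x') from rfl,
    (hG.hasFDerivAt.comp x hdiag).fderiv, ← smul_eq_mul, ← map_smul, ← map_add]
  simp

lemma contDiffAt_uncurry_pd_left {m : ℕ} (hG : ContDiffAt ℝ (m + 1) (uncurry G) (x, y)) :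
    ContDiffAt ℝ m (uncurry fun x' y' => pd i (fun x'' => G x'' y') x') (x, y) := by
  refine ((hG.fderiv_right le_rfl).clm_apply
    (contDiffAt_const (c := (Pi.single i 1, 0)))).congr_of_eventuallyEq ?_
  filter_upwards [hG.eventually (by simp)] with p hp
  exact pd_left_eq_fderiv_uncurry (hp.differentiableAt (by simp))

lemma contDiffAt_uncurry_pd_right {m : ℕ} (hG : ContDiffAt ℝ (m + 1) (uncurry G) (x, y)) :
    ContDiffAt ℝ m (uncurry fun x' y' => pd i (G x') y') (x, y) := by
  refine ((hG.fderiv_right le_rfl).clm_apply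
    (contDiffAt_const (c := (0, Pi.single i 1)))).congr_of_eventuallyEq ?_
  filter_upwards [hG.eventually (by simp)] with p hp
  exact pd_right_eq_fderiv_uncurry (hp.differentiableAt (by simp))

end TwoScale

section Divergence

variable {n : ℕ}

/-- `∇·(k ∇u)(z)`. -/
noncomputable def divKGrad (k : Fin n → Fin n → (Fin n → ℝ) → ℝ) (u : (Fin n → ℝ) → ℝ)
    (z : Fin n → ℝ) : ℝ :=
  ∑ i, pd i (fun z' => ∑ j, k i j z' * pd j u z') z

/-- `∇ₓ·(k(y) ∇_y F)(x, y)`. -/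
noncomputable def divxKGrady (k : Fin n → Fin n → (Fin n → ℝ) → ℝ)
    (F : (Fin n → ℝ) → (Fin n → ℝ) → ℝ) (x y : Fin n → ℝ) : ℝ :=
  ∑ i, pd i (fun x' => ∑ j, k i j y * pd j (F x') y) x

/-- `∇_y·(k(y) ∇ₓ F)(x, y)`. -/
noncomputable def divyKGradx (k : Fin n → Fin n → (Fin n → ℝ) → ℝ)
    (F : (Fin n → ℝ) → (Fin n → ℝ) → ℝ) (x y : Fin n → ℝ) : ℝ :=
  ∑ i, pd i (fun y' => ∑ j, k i j y' * pd j (fun x' => F x' y') x) y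

variable {k : Fin n → Fin n → (Fin n → ℝ) → ℝ} {u v : (Fin n → ℝ) → ℝ} {z : Fin n → ℝ}

theorem divKGrad_linear (a b : ℝ) (hk : ∀ i j, DifferentiableAt ℝ (k i j) z)
    (hu : ContDiffAt ℝ 2 u z) (hv : ContDiffAt ℝ 2 v z) :
    divKGrad k (fun w => a * u w + b * v w) z = a * divKGrad k u z + b * divKGrad k v z := by
  have hgrad : ∀ j, (fun z' => pd j (fun w => a * u w + b * v w) z')
      =ᶠ[𝓝 z] fun z' => a * pd j u z' + b * pd j v z' := by
    intro j
    filter_upwards [hu.eventually (by simp), hv.eventually (by simp)] with z' hu' hv'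
    have hu' := hu'.differentiableAt two_ne_zero
    have hv' := hv'.differentiableAt two_ne_zero
    rw [pd_add (by fun_prop) (by fun_prop), pd_const_mul hu', pd_const_mul hv']
  have hflux : ∀ i, (fun z' => ∑ j, k i j z' * pd j (fun w => a * u w + b * v w) z')
      =ᶠ[𝓝 z] fun z' => a * ∑ j, k i j z' * pd j u z' + b * ∑ j, k i j z' * pd j v z' := by
    intro i
    filter_upwards [eventually_all.2 hgrad] with z' hz'
    simp only [hz', Finset.mul_sum, ← Finset.sum_add_distrib]
    exact Finset.sum_congr rfl fun j _ => by ring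
  have hu' := fun j => differentiableAt_pd (i := j) hu
  have hv' := fun j => differentiableAt_pd (i := j) hv
  simp only [divKGrad, Finset.mul_sum, ← Finset.sum_add_distrib]
  refine Finset.sum_congr rfl fun i _ => ?_
  rw [pd_congr (hflux i), pd_add (by fun_prop) (by fun_prop), pd_const_mul (by fun_prop),
    pd_const_mul (by fun_prop)]

lemma divKGrad_add (hk : ∀ i j, DifferentiableAt ℝ (k i j) z)
    (hu : ContDiffAt ℝ 2 u z) (hv : ContDiffAt ℝ 2 v z) :
    divKGrad k (fun w => u w + v w) z = divKGrad k u z + divKGrad k v z := by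
  simpa using divKGrad_linear 1 1 hk hu hv

lemma divKGrad_sub (hk : ∀ i j, DifferentiableAt ℝ (k i j) z)
    (hu : ContDiffAt ℝ 2 u z) (hv : ContDiffAt ℝ 2 v z) :
    divKGrad k (fun w => u w - v w) z = divKGrad k u z - divKGrad k v z := by
  simpa [← sub_eq_add_neg] using divKGrad_linear 1 (-1) hk hu hv

lemma divKGrad_const_mul (hk : ∀ i j, DifferentiableAt ℝ (k i j) z) (a : ℝ)
    (hu : ContDiffAt ℝ 2 u z) :
    divKGrad k (fun w => a * u w) z = a * divKGrad k u z := by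
  simpa using divKGrad_linear a 0 hk hu hu

lemma divKGrad_mul_const (hk : ∀ i j, DifferentiableAt ℝ (k i j) z) (a : ℝ)
    (hu : ContDiffAt ℝ 2 u z) :
    divKGrad k (fun w => u w * a) z = divKGrad k u z * a := by
  simpa [mul_comm] using divKGrad_const_mul hk a hu

lemma divKGrad_const (a : ℝ) : divKGrad k (fun _ => a) z = 0 := by
  simp [divKGrad, pd_const]

lemma divKGrad_sum {ι : Type*} (hk : ∀ i j, DifferentiableAt ℝ (k i j) z) (s : Finset ι)
    {u : ι → (Fin n → ℝ) → ℝ} (hu : ∀ b ∈ s, ContDiffAt ℝ 2 (u b) z) :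
    divKGrad k (fun w => ∑ b ∈ s, u b w) z = ∑ b ∈ s, divKGrad k (u b) z := by
  classical
  induction s using Finset.induction_on with
  | empty => simpa using divKGrad_const (k := k) (z := z) 0
  | insert b s hb ih =>
    simp only [Finset.sum_insert hb]
    have hs : ∀ a ∈ s, ContDiffAt ℝ 2 (u a) z := fun a ha => hu a (Finset.mem_insert_of_mem ha)
    rw [divKGrad_add hk (hu b (Finset.mem_insert_self b s)) (ContDiffAt.sum hs), ih hs]

end Divergence

section Expansion

variable {n : ℕ} {k : Fin n → Fin n → (Fin n → ℝ) → ℝ} {F : (Fin n → ℝ) → (Fin n → ℝ) → ℝ}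
  {x y : Fin n → ℝ} {c : ℝ}

/-- Row `i` of the flux `k(y) ∇ₓF(x, y)`. -/
noncomputable def slowFlux (k : Fin n → Fin n → (Fin n → ℝ) → ℝ)
    (F : (Fin n → ℝ) → (Fin n → ℝ) → ℝ) (i : Fin n) (x y : Fin n → ℝ) : ℝ :=
  ∑ j, k i j y * pd j (fun x' => F x' y) x

/-- Row `i` of the flux `k(y) ∇_y F(x, y)`. -/
noncomputable def fastFlux (k : Fin n → Fin n → (Fin n → ℝ) → ℝ)
    (F : (Fin n → ℝ) → (Fin n → ℝ) → ℝ) (i : Fin n) (x y : Fin n → ℝ) : ℝ :=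
  ∑ j, k i j y * pd j (F x) y

lemma differentiableAt_uncurry_slowFlux (hk : ∀ i j, DifferentiableAt ℝ (k i j) y)
    (hF : ContDiffAt ℝ 2 (uncurry F) (x, y)) (i : Fin n) :
    DifferentiableAt ℝ (uncurry (slowFlux k F i)) (x, y) := by
  have hFx : ∀ j, DifferentiableAt ℝ (fun p : (Fin n → ℝ) × (Fin n → ℝ) =>
      pd j (fun x' => F x' p.2) p.1) (x, y) :=
    fun j => (contDiffAt_uncurry_pd_left hF).differentiableAt one_ne_zero
  show DifferentiableAt ℝ (fun p : (Fin n → ℝ) × (Fin n → ℝ) =>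
    ∑ j, k i j p.2 * pd j (fun x' => F x' p.2) p.1) (x, y)
  fun_prop

lemma differentiableAt_uncurry_fastFlux (hk : ∀ i j, DifferentiableAt ℝ (k i j) y)
    (hF : ContDiffAt ℝ 2 (uncurry F) (x, y)) (i : Fin n) :
    DifferentiableAt ℝ (uncurry (fastFlux k F i)) (x, y) := by
  have hFy : ∀ j, DifferentiableAt ℝ (fun p : (Fin n → ℝ) × (Fin n → ℝ) =>
      pd j (F p.1) p.2) (x, y) :=
    fun j => (contDiffAt_uncurry_pd_right hF).differentiableAt one_ne_zero
  show DifferentiableAt ℝ (fun p : (Fin n → ℝ) × (Fin n → ℝ) =>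
    ∑ j, k i j p.2 * pd j (F p.1) p.2) (x, y)
  fun_prop

lemma contDiffAt_twoScale {m : ℕ} (hF : ContDiffAt ℝ m (uncurry F) (x, c • x)) :
    ContDiffAt ℝ m (fun x' => F x' (c • x')) x :=
  hF.comp x (contDiffAt_id.prodMk (contDiffAt_id.const_smul c))

lemma flux_twoScale_eventuallyEq (hF : ContDiffAt ℝ 2 (uncurry F) (x, c • x)) (i : Fin n) :
    (fun x' => ∑ j, k i j (c • x') * pd j (fun x'' => F x'' (c • x'')) x')
      =ᶠ[𝓝 x] fun x' => slowFlux k F i x' (c • x') + c * fastFlux k F i x' (c • x') := by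
  have hdiag : Tendsto (fun x' => (x', c • x')) (𝓝 x) (𝓝 (x, c • x)) :=
    (continuous_id.prodMk (continuous_const_smul c)).tendsto x
  filter_upwards [hdiag.eventually (hF.eventually (by simp))] with x' hx'
  simp only [slowFlux, fastFlux, pd_twoScale (hx'.differentiableAt two_ne_zero), mul_add,
    Finset.mul_sum, Finset.sum_add_distrib]
  exact congrArg _ (Finset.sum_congr rfl fun j _ => by ring)

theorem divKGrad_twoScale (hk : ∀ i j, Differentiable ℝ (k i j))
    (hF : ContDiffAt ℝ 2 (uncurry F) (x, c • x)) :
    divKGrad (fun i j z => k i j (c • z)) (fun x' => F x' (c • x')) x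
      = divKGrad (fun i j _ => k i j (c • x)) (fun x' => F x' (c • x)) x
        + c * (divxKGrady k F x (c • x) + divyKGradx k F x (c • x))
        + c ^ 2 * divKGrad k (F x) (c • x) := by
  have hk' := fun i j => (hk i j).differentiableAt (x := c • x)
  have hA := differentiableAt_uncurry_slowFlux hk' hF
  have hB := differentiableAt_uncurry_fastFlux hk' hF
  calc divKGrad (fun i j z => k i j (c • z)) (fun x' => F x' (c • x')) x
      = ∑ i, pd i (fun x' => slowFlux k F i x' (c • x') + c * fastFlux k F i x' (c • x')) x :=
        Finset.sum_congr rfl fun i _ => pd_congr (flux_twoScale_eventuallyEq hF i)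
    _ = ∑ i, (pd i (fun x' => slowFlux k F i x' (c • x)) x
          + c * pd i (fun x' => fastFlux k F i x' (c • x)) x
          + c * (pd i (fun y' => slowFlux k F i x y') (c • x)
            + c * pd i (fun y' => fastFlux k F i x y') (c • x))) := by
        refine Finset.sum_congr rfl fun i _ => ?_
        rw [pd_twoScale (G := fun x' y' => slowFlux k F i x' y' + c * fastFlux k F i x' y')
            ((hA i).add ((hB i).const_mul c)),
          pd_add (hA i).curry_left ((hB i).curry_left.const_mul c),
          pd_const_mul (hB i).curry_left,
          pd_add (hA i).curry_right ((hB i).curry_right.const_mul c),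
          pd_const_mul (hB i).curry_right]
    _ = _ := by
        simp only [divKGrad, divxKGrady, divyKGradx, slowFlux, fastFlux, Finset.mul_sum,
          ← Finset.sum_add_distrib]
        exact Finset.sum_congr rfl fun i _ => by ring

end Expansion

section Separated

variable {n : ℕ} {k : Fin n → Fin n → (Fin n → ℝ) → ℝ} {x y : Fin n → ℝ}

lemma divKGrad_const_coeff (K : Fin n → Fin n → ℝ) {u : (Fin n → ℝ) → ℝ}
    (hu : ContDiffAt ℝ 2 u x) :
    divKGrad (fun i j _ => K i j) u x = ∑ i, ∑ j, K i j * pd i (pd j u) x := by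
  have := fun j => differentiableAt_pd (i := j) hu
  refine Finset.sum_congr rfl fun i _ => ?_
  rw [pd_sum _ fun j _ => (this j).const_mul _]
  exact Finset.sum_congr rfl fun j _ => pd_const_mul (this j)

lemma divxKGrady_of_indep (g : (Fin n → ℝ) → ℝ) : divxKGrady k (fun x _ => g x) x y = 0 := by
  simp [divxKGrady, pd_const]

lemma divyKGradx_of_indep {g : (Fin n → ℝ) → ℝ} (hk : ∀ i j, DifferentiableAt ℝ (k i j) y) :
    divyKGradx k (fun x _ => g x) x y = ∑ i, ∑ j, pd i (k i j) y * pd j g x := by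
  refine Finset.sum_congr rfl fun i _ => ?_
  rw [pd_sum _ fun j _ => (hk i j).mul_const _]
  exact Finset.sum_congr rfl fun j _ => pd_mul_const (hk i j)

variable {ι : Type*} [Fintype ι] {m g : ι → (Fin n → ℝ) → ℝ}

lemma divxKGrady_sep (hm : ∀ a, DifferentiableAt ℝ (m a) y)
    (hg : ∀ a, DifferentiableAt ℝ (g a) x) :
    divxKGrady k (fun x y => ∑ a, m a y * g a x) x y
      = ∑ i, ∑ j, ∑ a, k i j y * pd j (m a) y * pd i (g a) x := by
  have hgrad : ∀ j x', pd j (fun y' => ∑ a, m a y' * g a x') y = ∑ a, pd j (m a) y * g a x' :=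
    fun j x' => by
      rw [pd_sum _ fun a _ => (hm a).mul_const _]
      exact Finset.sum_congr rfl fun a _ => pd_mul_const (hm a)
  refine Finset.sum_congr rfl fun i _ => ?_
  simp only [hgrad, Finset.mul_sum]
  rw [pd_sum _ fun j _ => by fun_prop]
  refine Finset.sum_congr rfl fun j _ => ?_
  rw [pd_sum _ fun a _ => by fun_prop]
  refine Finset.sum_congr rfl fun a _ => ?_
  simp_rw [← mul_assoc]
  exact pd_const_mul (hg a)

lemma divyKGradx_sep (hk : ∀ i j, DifferentiableAt ℝ (k i j) y)
    (hm : ∀ a, DifferentiableAt ℝ (m a) y) (hg : ∀ a, DifferentiableAt ℝ (g a) x) :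
    divyKGradx k (fun x y => ∑ a, m a y * g a x) x y
      = ∑ i, ∑ j, ∑ a, pd i (fun y' => k i j y' * m a y') y * pd j (g a) x := by
  have hgrad : ∀ j y', pd j (fun x' => ∑ a, m a y' * g a x') x = ∑ a, m a y' * pd j (g a) x :=
    fun j y' => by
      rw [pd_sum _ fun a _ => (hg a).const_mul _]
      exact Finset.sum_congr rfl fun a _ => pd_const_mul (hg a)
  refine Finset.sum_congr rfl fun i _ => ?_
  simp only [hgrad, Finset.mul_sum]
  rw [pd_sum _ fun j _ => by fun_prop]
  refine Finset.sum_congr rfl fun j _ => ?_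
  rw [pd_sum _ fun a _ => by fun_prop]
  refine Finset.sum_congr rfl fun a _ => ?_
  simp_rw [← mul_assoc]
  exact pd_mul_const (by fun_prop)

end Separated

section Correctors

variable {n : ℕ} {k : Fin n → Fin n → (Fin n → ℝ) → ℝ} {M : Fin n → (Fin n → ℝ) → ℝ}
  {M2 : Fin n → Fin n → (Fin n → ℝ) → ℝ} {T0 : (Fin n → ℝ) → ℝ} {x y : Fin n → ℝ}

lemma contDiffAt_uncurry_T1sep (hM : ∀ α, ContDiffAt ℝ 2 (M α) y)
    (hT0 : ContDiffAt ℝ 3 T0 x) :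
    ContDiffAt ℝ 2 (uncurry (T1sep M T0)) (x, y) := by
  have hT0' := fun α => contDiffAt_pd (i := α) (m := 2) hT0
  show ContDiffAt ℝ 2 (fun p : (Fin n → ℝ) × (Fin n → ℝ) => ∑ α, M α p.2 * pd α T0 p.1) (x, y)
  fun_prop

lemma contDiffAt_uncurry_T2sep (hM2 : ∀ α₁ α₂, ContDiffAt ℝ 2 (M2 α₁ α₂) y)
    (hT0 : ContDiffAt ℝ 4 T0 x) : ContDiffAt ℝ 2 (uncurry (T2sep M2 T0)) (x, y) := by
  have hT0' := fun α₁ α₂ =>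
    contDiffAt_pd (i := α₁) (m := 2) (contDiffAt_pd (i := α₂) (m := 3) hT0)
  show ContDiffAt ℝ 2
    (fun p : (Fin n → ℝ) × (Fin n → ℝ) => ∑ α₁, ∑ α₂, M2 α₁ α₂ p.2 * pd α₁ (pd α₂ T0) p.1) (x, y)
  fun_prop

lemma divKGrad_T1sep (hk : ∀ i j, DifferentiableAt ℝ (k i j) y)
    (hM : ∀ α, ContDiffAt ℝ 2 (M α) y) :
    divKGrad k (T1sep M T0 x) y = ∑ α, divKGrad k (M α) y * pd α T0 x := by
  rw [show T1sep M T0 x = fun y => ∑ α, M α y * pd α T0 x from rfl,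
    divKGrad_sum hk _ fun α _ => (hM α).mul contDiffAt_const]
  exact Finset.sum_congr rfl fun α _ => divKGrad_mul_const hk _ (hM α)

lemma divKGrad_T2sep (hk : ∀ i j, DifferentiableAt ℝ (k i j) y)
    (hM2 : ∀ α₁ α₂, ContDiffAt ℝ 2 (M2 α₁ α₂) y) :
    divKGrad k (T2sep M2 T0 x) y
      = ∑ α₁, ∑ α₂, divKGrad k (M2 α₁ α₂) y * pd α₁ (pd α₂ T0) x := by
  rw [show T2sep M2 T0 x = fun y => ∑ α₁, ∑ α₂, M2 α₁ α₂ y * pd α₁ (pd α₂ T0) x from rfl,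
    divKGrad_sum hk _ fun α₁ _ =>
      ContDiffAt.sum fun α₂ _ => (hM2 α₁ α₂).mul contDiffAt_const]
  refine Finset.sum_congr rfl fun α₁ _ => ?_
  rw [divKGrad_sum hk _ fun α₂ _ => (hM2 α₁ α₂).mul contDiffAt_const]
  exact Finset.sum_congr rfl fun α₂ _ => divKGrad_mul_const hk _ (hM2 α₁ α₂)

lemma cancel_of_firstOrderCell (hk : ∀ i j, DifferentiableAt ℝ (k i j) y)
    (hM : ∀ α, ContDiffAt ℝ 2 (M α) y)
    (hcell : ∀ α, divKGrad k (M α) y = -∑ i, pd i (k i α) y) :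
    divyKGradx k (fun x _ => T0 x) x y + divKGrad k (T1sep M T0 x) y = 0 := by
  rw [divyKGradx_of_indep hk, divKGrad_T1sep hk hM]
  simp only [hcell, neg_mul, Finset.sum_neg_distrib, Finset.sum_mul]
  rw [Finset.sum_comm]
  exact add_neg_cancel _

lemma eq_homogenized_of_secondOrderCell {khat : Fin n → Fin n → ℝ}
    (hk : ∀ i j, DifferentiableAt ℝ (k i j) y)
    (hM : ∀ α, ContDiffAt ℝ 2 (M α) y) (hM2 : ∀ α₁ α₂, ContDiffAt ℝ 2 (M2 α₁ α₂) y)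
    (hT0 : ContDiffAt ℝ 2 T0 x)
    (hcell2 : ∀ α₁ α₂, divKGrad k (M2 α₁ α₂) y = khat α₁ α₂ - k α₁ α₂ y
      - ∑ i, pd i (fun y' => k i α₂ y' * M α₁ y') y - ∑ j, k α₁ j y * pd j (M α₂) y) :
    divKGrad (fun i j _ => k i j y) T0 x + divxKGrady k (T1sep M T0) x y
      + divyKGradx k (T1sep M T0) x y + divKGrad k (T2sep M2 T0 x) y
      = ∑ α₁, ∑ α₂, khat α₁ α₂ * pd α₁ (pd α₂ T0) x := by
  have hdM := fun α => (hM α).differentiableAt two_ne_zero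
  have hdT0 := fun α => differentiableAt_pd (i := α) hT0
  rw [divKGrad_const_coeff _ hT0, divKGrad_T2sep hk hM2,
    show divxKGrady k (T1sep M T0) x y = _ from divxKGrady_sep hdM hdT0,
    show divyKGradx k (T1sep M T0) x y = _ from divyKGradx_sep hk hdM hdT0]
  have hYX :
      ∑ α₁, ∑ α₂, (∑ i, pd i (fun y' => k i α₂ y' * M α₁ y') y) * pd α₁ (pd α₂ T0) x
      = ∑ i, ∑ j, ∑ a, pd i (fun y' => k i j y' * M a y') y * pd j (pd a T0) x := by
    simp only [Finset.sum_mul]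
    rw [Finset.sum_comm_cycle]
    refine Finset.sum_congr rfl fun i _ => ?_
    rw [Finset.sum_comm]
    exact Finset.sum_congr rfl fun j _ =>
      Finset.sum_congr rfl fun a _ => by rw [pd_symm hT0]
  have hXY : ∑ α₁, ∑ α₂, (∑ j, k α₁ j y * pd j (M α₂) y) * pd α₁ (pd α₂ T0) x
      = ∑ i, ∑ j, ∑ a, k i j y * pd j (M a) y * pd i (pd a T0) x := by
    simp only [Finset.sum_mul]
    exact Finset.sum_congr rfl fun i _ => Finset.sum_comm
  simp only [hcell2, sub_mul, Finset.sum_sub_distrib, hYX, hXY]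
  ring

end Correctors

section Ansatz

variable {n : ℕ} {k : Fin n → Fin n → (Fin n → ℝ) → ℝ} {M : Fin n → (Fin n → ℝ) → ℝ}
  {M2 : Fin n → Fin n → (Fin n → ℝ) → ℝ} {T0 : (Fin n → ℝ) → ℝ} {x : Fin n → ℝ} {ε : ℝ}

lemma contDiffAt_sotsAnsatz (hM : ∀ α, ContDiffAt ℝ 2 (M α) (ε⁻¹ • x))
    (hM2 : ∀ α₁ α₂, ContDiffAt ℝ 2 (M2 α₁ α₂) (ε⁻¹ • x)) (hT0 : ContDiffAt ℝ 4 T0 x) :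
    ContDiffAt ℝ 2 (fun x' => T0 x' + ε * T1sep M T0 x' (ε⁻¹ • x')
      + ε ^ 2 * T2sep M2 T0 x' (ε⁻¹ • x')) x :=
  ((hT0.of_le (by norm_num)).add (contDiffAt_const.mul (contDiffAt_twoScale
    (contDiffAt_uncurry_T1sep hM (hT0.of_le (by norm_num)))))).add
    (contDiffAt_const.mul (contDiffAt_twoScale (contDiffAt_uncurry_T2sep hM2 hT0)))

theorem divKGrad_sotsAnsatz (hε : ε ≠ 0) (hk : ∀ i j, Differentiable ℝ (k i j))
    (hM : ∀ α, ContDiffAt ℝ 2 (M α) (ε⁻¹ • x))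
    (hM2 : ∀ α₁ α₂, ContDiffAt ℝ 2 (M2 α₁ α₂) (ε⁻¹ • x)) (hT0 : ContDiffAt ℝ 4 T0 x) :
    divKGrad (fun i j z => k i j (ε⁻¹ • z)) (fun x' => T0 x' + ε * T1sep M T0 x' (ε⁻¹ • x')
        + ε ^ 2 * T2sep M2 T0 x' (ε⁻¹ • x')) x
      = ε⁻¹ * (divyKGradx k (fun x _ => T0 x) x (ε⁻¹ • x)
          + divKGrad k (T1sep M T0 x) (ε⁻¹ • x))
        + (divKGrad (fun i j _ => k i j (ε⁻¹ • x)) T0 x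
          + divxKGrady k (T1sep M T0) x (ε⁻¹ • x) + divyKGradx k (T1sep M T0) x (ε⁻¹ • x)
          + divKGrad k (T2sep M2 T0 x) (ε⁻¹ • x))
        + ε * (divyKGradx k (T2sep M2 T0) x (ε⁻¹ • x) + divxKGrady k (T2sep M2 T0) x (ε⁻¹ • x)
          + divKGrad (fun i j _ => k i j (ε⁻¹ • x)) (fun x' => T1sep M T0 x' (ε⁻¹ • x)) x)
        + ε ^ 2 * divKGrad (fun i j _ => k i j (ε⁻¹ • x))
          (fun x' => T2sep M2 T0 x' (ε⁻¹ • x)) x := by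
  have hkx : ∀ i j, DifferentiableAt ℝ (fun z => k i j (ε⁻¹ • z)) x := fun i j => by
    have := hk i j
    fun_prop
  have hT0' : ContDiffAt ℝ 2 T0 x := hT0.of_le (by norm_num)
  have h0 : ContDiffAt ℝ 2 (uncurry fun x' (_ : Fin n → ℝ) => T0 x') (x, ε⁻¹ • x) :=
    hT0'.comp (x, ε⁻¹ • x) contDiffAt_fst
  have h1 := contDiffAt_uncurry_T1sep hM (hT0.of_le (by norm_num))
  have h2 := contDiffAt_uncurry_T2sep hM2 hT0
  have h1' := contDiffAt_twoScale h1
  have h2' := contDiffAt_twoScale h2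
  rw [divKGrad_add hkx (hT0'.add (contDiffAt_const.mul h1')) (contDiffAt_const.mul h2'),
    divKGrad_add hkx hT0' (contDiffAt_const.mul h1'), divKGrad_const_mul hkx _ h1',
    divKGrad_const_mul hkx _ h2', divKGrad_twoScale hk h0, divKGrad_twoScale hk h1,
    divKGrad_twoScale hk h2, divxKGrady_of_indep, divKGrad_const]
  field_simp
  ring

end Ansatz

theorem sots_residual_equation_general (n : ℕ)
    (Ω : Set (Fin n → ℝ)) (hΩ : IsOpen Ω)
    (k : Fin n → Fin n → (Fin n → ℝ) → ℝ)
    (hk : ∀ i j, ContDiff ℝ 1 (k i j))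
    (h : (Fin n → ℝ) → ℝ)
    (khat : Fin n → Fin n → ℝ)
    (ε : ℝ) (hε : 0 < ε)
    (Te : (Fin n → ℝ) → ℝ) (hTe : ContDiffOn ℝ 2 Te Ω)
    -- (a) the heterogeneous equation on Ω:
    (hTeeq : ∀ x ∈ Ω,
      -∑ i, pd i (fun x' => ∑ j, k i j (ε⁻¹ • x') * pd j Te x') x = h x)
    (T0 : (Fin n → ℝ) → ℝ) (hT0 : ContDiffOn ℝ 4 T0 Ω)
    -- (b) the homogenized equation with constant coefficients k̂ on Ω:
    (hT0eq : ∀ x ∈ Ω, -∑ i, ∑ j, khat i j * pd i (pd j T0) x = h x)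
    (M : Fin n → (Fin n → ℝ) → ℝ)
    (hM : ∀ α, ContDiff ℝ 2 (M α))
    -- (c) the first-order cell equations:
    (hcell : ∀ (α : Fin n) (y : Fin n → ℝ),
      ∑ i, pd i (fun y' => ∑ j, k i j y' * pd j (M α) y') y
        = -∑ i, pd i (k i α) y)
    (M2 : Fin n → Fin n → (Fin n → ℝ) → ℝ)
    (hM2 : ∀ α₁ α₂, ContDiff ℝ 2 (M2 α₁ α₂))
    -- (d) the second-order cell equations:
    (hcell2 : ∀ (α₁ α₂ : Fin n) (y : Fin n → ℝ),
      ∑ i, pd i (fun y' => ∑ j, k i j y' * pd j (M2 α₁ α₂) y') y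
        = khat α₁ α₂ - k α₁ α₂ y
          - ∑ i, pd i (fun y' => k i α₂ y' * M α₁ y') y
          - ∑ j, k α₁ j y * pd j (M α₂) y) :
    ∀ x ∈ Ω,
      -∑ i, pd i (fun x' => ∑ j, k i j (ε⁻¹ • x') *
          pd j (fun x'' => Te x''
            - (T0 x'' + ε * T1sep M T0 x'' (ε⁻¹ • x'')
                + ε ^ 2 * T2sep M2 T0 x'' (ε⁻¹ • x''))) x') x
      =
      -- ε G₀(x, x/ε)
      ε * ((∑ i, pd i (fun y' => ∑ j, k i j y' *
              pd j (fun x' => T2sep M2 T0 x' y') x) (ε⁻¹ • x))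
          + (∑ i, pd i (fun x' => ∑ j, k i j (ε⁻¹ • x) *
              pd j (fun y' => T2sep M2 T0 x' y') (ε⁻¹ • x)) x)
          + (∑ i, pd i (fun x' => ∑ j, k i j (ε⁻¹ • x) *
              pd j (fun x'' => T1sep M T0 x'' (ε⁻¹ • x)) x') x))
      +
      -- ε² G₁(x, x/ε)
      ε ^ 2 * (∑ i, pd i (fun x' => ∑ j, k i j (ε⁻¹ • x) *
              pd j (fun x'' => T2sep M2 T0 x'' (ε⁻¹ • x)) x') x) := by
  intro x hx
  have hk' : ∀ i j, Differentiable ℝ (k i j) := fun i j => (hk i j).differentiable one_ne_zero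
  have hkx : ∀ i j, DifferentiableAt ℝ (fun z => k i j (ε⁻¹ • z)) x := fun i j => by
    have := hk' i j
    fun_prop
  have hT0x : ContDiffAt ℝ 4 T0 x := hT0.contDiffAt (hΩ.mem_nhds hx)
  have hM' := fun α => (hM α).contDiffAt (x := ε⁻¹ • x)
  have hM2' := fun α₁ α₂ => (hM2 α₁ α₂).contDiffAt (x := ε⁻¹ • x)
  show -divKGrad (fun i j z => k i j (ε⁻¹ • z)) (fun x'' => Te x'' - (T0 x''
      + ε * T1sep M T0 x'' (ε⁻¹ • x'') + ε ^ 2 * T2sep M2 T0 x'' (ε⁻¹ • x''))) x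
    = ε * (divyKGradx k (T2sep M2 T0) x (ε⁻¹ • x) + divxKGrady k (T2sep M2 T0) x (ε⁻¹ • x)
        + divKGrad (fun i j _ => k i j (ε⁻¹ • x)) (fun x' => T1sep M T0 x' (ε⁻¹ • x)) x)
      + ε ^ 2 * divKGrad (fun i j _ => k i j (ε⁻¹ • x))
        (fun x' => T2sep M2 T0 x' (ε⁻¹ • x)) x
  have hky := fun i j => (hk' i j).differentiableAt (x := ε⁻¹ • x)
  rw [divKGrad_sub hkx (hTe.contDiffAt (hΩ.mem_nhds hx)) (contDiffAt_sotsAnsatz hM' hM2' hT0x),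
    divKGrad_sotsAnsatz hε.ne' hk' hM' hM2' hT0x, cancel_of_firstOrderCell hky hM' (hcell · _),
    eq_homogenized_of_secondOrderCell hky hM' hM2' (hT0x.of_le (by norm_num)) (hcell2 · · _)]
  have hTe : -divKGrad (fun i j z => k i j (ε⁻¹ • z)) Te x = h x := hTeeq x hx
  linarith [hT0eq x hx]

/-- **SOTS residual equation.**  With
`T^{(2ε)}(x) = T⁰(x) + ε T¹(x,x/ε) + ε² T²(x,x/ε)` and residual
`T_Δ^{(2ε)} = T^ε − T^{(2ε)}`, one has, pointwise on `Ω`,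
`−∂_i(k_{ij}(x/ε)∂_j T_Δ^{(2ε)}) = ε G₀(x,x/ε) + ε² G₁(x,x/ε)`; in particular the SOTS
residual is of order `O(ε)` in the pointwise sense. -/
theorem sots_residual_equation (n : ℕ) (hn : 1 ≤ n)
    (Ω : Set (Fin n → ℝ)) (hΩ : IsOpen Ω)
    (k : Fin n → Fin n → (Fin n → ℝ) → ℝ)
    (hk : ∀ i j, ContDiff ℝ 1 (k i j))
    (h : (Fin n → ℝ) → ℝ)
    (khat : Fin n → Fin n → ℝ)
    (ε : ℝ) (hε : 0 < ε)
    (Te : (Fin n → ℝ) → ℝ) (hTe : ContDiffOn ℝ 2 Te Ω)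
    -- (a) the heterogeneous equation on Ω:
    (hTeeq : ∀ x ∈ Ω,
      -∑ i, pd i (fun x' => ∑ j, k i j (ε⁻¹ • x') * pd j Te x') x = h x)
    (T0 : (Fin n → ℝ) → ℝ) (hT0 : ContDiffOn ℝ 4 T0 Ω)
    -- (b) the homogenized equation with constant coefficients k̂ on Ω:
    (hT0eq : ∀ x ∈ Ω, -∑ i, ∑ j, khat i j * pd i (pd j T0) x = h x)
    (M : Fin n → (Fin n → ℝ) → ℝ)
    (hM : ∀ α, ContDiff ℝ 2 (M α))
    -- (c) the first-order cell equations: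
    (hcell : ∀ (α : Fin n) (y : Fin n → ℝ),
      ∑ i, pd i (fun y' => ∑ j, k i j y' * pd j (M α) y') y
        = -∑ i, pd i (k i α) y)
    (M2 : Fin n → Fin n → (Fin n → ℝ) → ℝ)
    (hM2 : ∀ α₁ α₂, ContDiff ℝ 2 (M2 α₁ α₂))
    -- (d) the second-order cell equations:
    (hcell2 : ∀ (α₁ α₂ : Fin n) (y : Fin n → ℝ),
      ∑ i, pd i (fun y' => ∑ j, k i j y' * pd j (M2 α₁ α₂) y') y
        = khat α₁ α₂ - k α₁ α₂ y
          - ∑ i, pd i (fun y' => k i α₂ y' * M α₁ y') y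
          - ∑ j, k α₁ j y * pd j (M α₂) y) :
    ∀ x ∈ Ω,
      -∑ i, pd i (fun x' => ∑ j, k i j (ε⁻¹ • x') *
          pd j (fun x'' => Te x''
            - (T0 x'' + ε * T1sep M T0 x'' (ε⁻¹ • x'')
                + ε ^ 2 * T2sep M2 T0 x'' (ε⁻¹ • x''))) x') x
      =
      -- ε G₀(x, x/ε)
      ε * ((∑ i, pd i (fun y' => ∑ j, k i j y' *
              pd j (fun x' => T2sep M2 T0 x' y') x) (ε⁻¹ • x))
          + (∑ i, pd i (fun x' => ∑ j, k i j (ε⁻¹ • x) *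
              pd j (fun y' => T2sep M2 T0 x' y') (ε⁻¹ • x)) x)
          + (∑ i, pd i (fun x' => ∑ j, k i j (ε⁻¹ • x) *
              pd j (fun x'' => T1sep M T0 x'' (ε⁻¹ • x)) x') x))
      +
      -- ε² G₁(x, x/ε)
      ε ^ 2 * (∑ i, pd i (fun x' => ∑ j, k i j (ε⁻¹ • x) *
              pd j (fun x'' => T2sep M2 T0 x'' (ε⁻¹ • x)) x') x) :=
  sots_residual_equation_general n Ω hΩ k hk h khat ε hε Te hTe hTeeq T0 hT0 hT0eq M hM hcell M2 hM2
    hcell2
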